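/- arXiv:1609.01930 — 3 statements merged into one kernel-verified Lean document; each statement's English description precedes it below -/
import Mathlib

section
/- Let k be a field of characteristic ≠ 2, let a, b ∈ k be nonzero, and let k_{a,b} denote the quotient field of k[x,y]/(a·x² + b·y² − 1). If an element f of k_{a,b} is algebraic over k, then f lies in (the canonical image of) k. In other words, the field of constants of k_{a,b} over k is equal to k. -/
/-!
Put `d = (1 - a x²) / b ∈ k(x)`, so that `y² = d` on the conic and `k_{a,b} ≅ k(x)(√d)`.
Here `x` is transcendental over `k` because the equation has degree `2` in `y`, and `d` is not
a constant times a square in `k(x)`, because `x² - 1/a` is squarefree (as `char k ≠ 2`) of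
positive degree. Now `k` is algebraically closed in `k(x)`. If `w = u + v√d` is algebraic over
`k`, then so is its conjugate `u - v√d`, hence so is `(2v√d)² = 4v²d ∈ k(x)`, which is therefore
a constant; this forces `v = 0`, and then `w = u ∈ k(x)` is a constant.
-/

open MvPolynomial

noncomputable section

/-- The defining polynomial `a·x² + b·y² − 1` of the affine conic. -/
def conicPoly (k : Type*) [Field k] (a b : k) : MvPolynomial (Fin 2) k :=
  C a * X 0 ^ 2 + C b * X 1 ^ 2 - 1

/-- The coordinate ring `k[x,y]/(a·x² + b·y² − 1)` of the affine conic. -/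
abbrev ConicRing (k : Type*) [Field k] (a b : k) : Type _ :=
  MvPolynomial (Fin 2) k ⧸ Ideal.span {conicPoly k a b}

/-- `K` (together with the embedding `ι : k →+* K`) is a model of the function field
`k_{a,b}`, i.e. the quotient field of `k[x,y]/(a·x² + b·y² − 1)`. -/
def IsConicFunctionField (k : Type*) [Field k] (a b : k)
    (K : Type*) [Field K] (ι : k →+* K) : Prop :=
  ∃ f : ConicRing k a b →+* K,
    Function.Injective f ∧
    f.comp (algebraMap k (ConicRing k a b)) = ι ∧
    ∀ z : K, ∃ p q : ConicRing k a b, f q ≠ 0 ∧ z = f p / f q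

/-- The subgroup of squares in `Kˣ`. -/
def sqSubgroup (K : Type*) [Field K] : Subgroup Kˣ :=
  MonoidHom.range (powMonoidHom 2 : Kˣ →* Kˣ)

/-- The square class group `Kˣ/Kˣ²`. -/
abbrev SqClass (K : Type*) [Field K] := Kˣ ⧸ sqSubgroup K

/-- The square class of a unit. -/
def sqCl {K : Type*} [Field K] (u : Kˣ) : SqClass K := QuotientGroup.mk u

/-- `α : Kˣ/Kˣ² → Lˣ/Lˣ²` is a Witt equivalence: it sends `-1` to `-1` and preserves
binary value sets. -/
structure IsWittEquiv {K L : Type*} [Field K] [Field L]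
    (α : SqClass K ≃* SqClass L) : Prop where
  map_neg_one : α (sqCl (-1)) = sqCl (-1)
  represents : ∀ (a b c : Kˣ) (a' b' c' : Lˣ),
    α (sqCl a) = sqCl a' → α (sqCl b) = sqCl b' → α (sqCl c) = sqCl c' →
    ((∃ x y : K, (c : K) = (a : K) * x ^ 2 + (b : K) * y ^ 2) ↔
      (∃ x y : L, (c' : L) = (a' : L) * x ^ 2 + (b' : L) * y ^ 2))

/-- Two fields are Witt equivalent if there is a Witt equivalence between them. -/
def WittEquivalent (K L : Type*) [Field K] [Field L] : Prop :=
  ∃ α : SqClass K ≃* SqClass L, IsWittEquiv α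

/-- An ordering of a field `F`. -/
structure IsOrdering {F : Type*} [Field F] (P : Set F) : Prop where
  add_mem : ∀ x ∈ P, ∀ y ∈ P, x + y ∈ P
  mul_mem : ∀ x ∈ P, ∀ y ∈ P, x * y ∈ P
  total : ∀ x : F, x ∈ P ∨ -x ∈ P
  antisymm : ∀ x : F, x ∈ P → -x ∈ P → x = 0

theorem RatFunc.algebraicClosure_eq_bot (k : Type*) [Field k] :
    algebraicClosure k (RatFunc k) = ⊥ := by
  refine eq_bot_iff.2 fun r hr ↦ IntermediateField.mem_bot.2 ?_
  by_contra hconst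
  refine r.transcendental_of_ne_C (fun ⟨c, hc⟩ ↦ hconst ⟨c, ?_⟩)
    (mem_algebraicClosure_iff.1 hr)
  rw [hc, RatFunc.algebraMap_eq_C]

open Polynomial in
theorem RatFunc.sq_mul_algebraMap_ne_algebraMap {k : Type*} [Field k] {s : k[X]}
    (hs : Squarefree s) (hdeg : 0 < s.natDegree) {v : RatFunc k} (hv : v ≠ 0) (c : k) :
    v ^ 2 * algebraMap k[X] (RatFunc k) s ≠ algebraMap k (RatFunc k) c := by
  intro h
  have hs0 : s ≠ 0 := hs.ne_zero
  have hn0 : v.num ≠ 0 := RatFunc.num_ne_zero hv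
  have hclear : v.num ^ 2 * s = Polynomial.C c * v.denom ^ 2 := by
    apply IsFractionRing.injective k[X] (RatFunc k)
    rw [← RatFunc.num_div_denom v, div_pow, div_mul_eq_mul_div,
      div_eq_iff (by simp [v.denom_ne_zero])] at h
    simpa [RatFunc.algebraMap_C] using h
  have hunit : IsUnit v.denom := by
    refine hs _ (sq v.denom ▸ ?_)
    exact (v.isCoprime_num_denom.symm.pow (m := 2) (n := 2)).dvd_of_dvd_mul_right
      ⟨Polynomial.C c, by linear_combination hclear⟩
  have hc0 : c ≠ 0 := by
    rintro rfl
    simp [hn0, hs0] at hclear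
  have hdegs := congrArg natDegree hclear
  rw [natDegree_mul (pow_ne_zero _ hn0) hs0, natDegree_C_mul (by simpa using hc0),
    natDegree_pow, natDegree_pow, natDegree_eq_zero_of_isUnit hunit] at hdegs
  omega

open Polynomial in
theorem AdjoinRoot.exists_eq_add_mul_root {R : Type*} [CommRing R] [Nontrivial R] (d : R)
    (w : AdjoinRoot (Polynomial.X ^ 2 - Polynomial.C d)) :
    ∃ u v : R, w = of _ u + of _ v * root _ := by
  have hmonic : (Polynomial.X ^ 2 - Polynomial.C d).Monic := monic_X_pow_sub_C d two_ne_zero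
  obtain ⟨g, rfl⟩ := mk_surjective w
  have hdeg : (g %ₘ (Polynomial.X ^ 2 - Polynomial.C d)).natDegree ≤ 1 := by
    have := natDegree_modByMonic_lt g hmonic (ne_of_apply_ne natDegree (by simp))
    rw [natDegree_X_pow_sub_C] at this
    omega
  obtain ⟨v, u, huv⟩ := exists_eq_X_add_C_of_natDegree_le_one hdeg
  refine ⟨u, v, ?_⟩
  rw [← mk_leftInverse hmonic (mk _ g), modByMonicHom_mk, huv, map_add, map_mul, mk_X, mk_C,
    mk_C, add_comm]

theorem irreducible_X_sq_sub_C_of_forall_sq_mul_ne {k F : Type*} [Field k] [Field F] [Algebra k F]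
    {d : F} (hd : ∀ v : F, v ≠ 0 → ∀ c : k, v ^ 2 * d ≠ algebraMap k F c) :
    Irreducible (Polynomial.X ^ 2 - Polynomial.C d) := by
  refine X_pow_sub_C_irreducible_of_prime Nat.prime_two fun e he ↦ ?_
  rcases eq_or_ne e 0 with rfl | he0
  · exact hd 1 one_ne_zero 0 (by simp [← he])
  · exact hd e⁻¹ (inv_ne_zero he0) 1 (by rw [← he, map_one]; field_simp)

theorem algebraicClosure_adjoinRoot_eq_bot {k F : Type*} [Field k] [Field F] [Algebra k F]
    (hF : algebraicClosure k F = ⊥) (hchar : (2 : k) ≠ 0) {d : F}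
    (hd : ∀ v : F, v ≠ 0 → ∀ c : k, v ^ 2 * d ≠ algebraMap k F c)
    [Fact (Irreducible (Polynomial.X ^ 2 - Polynomial.C d))] :
    algebraicClosure k (AdjoinRoot (Polynomial.X ^ 2 - Polynomial.C d)) = ⊥ := by
  have h2 : (2 : F) ≠ 0 := by
    rw [← map_ofNat (algebraMap k F) 2]; exact (map_ne_zero _).2 hchar
  set L := AdjoinRoot (Polynomial.X ^ 2 - Polynomial.C d)
  set r : L := AdjoinRoot.root _
  have hconst : ∀ u : F, IsAlgebraic k u → ∃ c, algebraMap k F c = u := fun u hu ↦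
    IntermediateField.mem_bot.1 (hF ▸ mem_algebraicClosure_iff.2 hu)
  have hr : r ^ 2 = algebraMap F L d := root_X_pow_sub_C_pow 2 d
  have hneg : (Polynomial.X ^ 2 - Polynomial.C d).eval₂ (Algebra.ofId F L) (-r) = 0 := by
    simp [hr]
  let σ : L →ₐ[k] L := (AdjoinRoot.liftAlgHom _ (Algebra.ofId F L) (-r) hneg).restrictScalars k
  have hσF (x : F) : σ (algebraMap F L x) = algebraMap F L x :=
    (AdjoinRoot.liftAlgHom _ (Algebra.ofId F L) (-r) hneg).commutes x
  have hσr : σ r = -r := AdjoinRoot.liftAlgHom_root _ _ _ hneg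
  refine eq_bot_iff.2 fun w hw ↦ IntermediateField.mem_bot.2 ?_
  replace hw := mem_algebraicClosure_iff.1 hw
  obtain ⟨u, v, rfl⟩ := AdjoinRoot.exists_eq_add_mul_root d w
  simp only [← AdjoinRoot.algebraMap_eq] at hw ⊢
  have hv : v = 0 := by
    by_contra hv
    have hdiff : (algebraMap F L u + algebraMap F L v * r
        - σ (algebraMap F L u + algebraMap F L v * r)) ^ 2 = algebraMap F L ((2 * v) ^ 2 * d) := by
      simp only [map_add, map_mul, map_pow, map_ofNat, hσF, hσr, ← hr]
      ring
    have := ((hw.isIntegral.sub (hw.algHom σ).isIntegral).pow 2).isAlgebraic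
    rw [hdiff, isAlgebraic_algebraMap_iff (algebraMap F L).injective] at this
    obtain ⟨c, hc⟩ := hconst _ this
    exact hd _ (mul_ne_zero h2 hv) c hc.symm
  subst hv
  rw [map_zero, zero_mul, add_zero] at hw ⊢
  obtain ⟨c, rfl⟩ := hconst u ((isAlgebraic_algebraMap_iff (algebraMap F L).injective).1 hw)
  exact ⟨c, IsScalarTower.algebraMap_apply k F L c⟩

theorem transcendental_conicRing_X_zero {k : Type*} [Field k] {a b : k} (hb : b ≠ 0) :
    Transcendental k
      (Ideal.Quotient.mk (Ideal.span {conicPoly k a b}) (X 0) : ConicRing k a b) := by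
  rintro ⟨p, hp, hroot⟩
  rw [← Ideal.Quotient.mkₐ_eq_mk k, Polynomial.aeval_algHom_apply, Ideal.Quotient.mkₐ_eq_mk,
    Ideal.Quotient.eq_zero_iff_mem, Ideal.mem_span_singleton'] at hroot
  obtain ⟨g, hg⟩ := hroot
  let θ : MvPolynomial (Fin 2) k →ₐ[k] Polynomial (Polynomial k) :=
    aeval ![Polynomial.C Polynomial.X, Polynomial.X]
  have hθp : θ (Polynomial.aeval (X 0) p) = Polynomial.C p := by
    rw [← Polynomial.aeval_algHom_apply, MvPolynomial.aeval_X, Matrix.cons_val_zero,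
      ← Polynomial.algebraMap_eq,
      Polynomial.aeval_algebraMap_apply, Polynomial.aeval_X_left_apply]
  have hθconic : θ (conicPoly k a b) =
      Polynomial.C (Polynomial.C b) * Polynomial.X ^ 2 + Polynomial.C 0 * Polynomial.X
        + Polynomial.C (Polynomial.C a * Polynomial.X ^ 2 - 1) := by
    simp only [θ, conicPoly, map_sub, map_add, map_mul, map_pow, map_one, map_zero, algHom_C,
      Polynomial.algebraMap_apply, Polynomial.algebraMap_eq, MvPolynomial.aeval_X,
      Matrix.cons_val_zero, Matrix.cons_val_one, Matrix.cons_val_fin_one]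
    ring
  have hdeg : (θ (conicPoly k a b)).natDegree = 2 := by
    rw [hθconic]; exact Polynomial.natDegree_quadratic (by simpa using hb)
  have hθg : θ g * θ (conicPoly k a b) = Polynomial.C p := by rw [← map_mul, hg, hθp]
  have hg0 : θ g ≠ 0 := by
    rintro h0
    rw [h0, zero_mul, eq_comm, Polynomial.C_eq_zero] at hθg
    exact hp hθg
  have hconic0 : θ (conicPoly k a b) ≠ 0 := Polynomial.ne_zero_of_natDegree_gt (hdeg ▸ two_pos)
  have := congrArg Polynomial.natDegree hθg
  rw [Polynomial.natDegree_mul hg0 hconic0, hdeg, Polynomial.natDegree_C] at this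
  omega

def conicRadicand (k : Type*) [Field k] (a b : k) : RatFunc k :=
  (1 - RatFunc.C a * RatFunc.X ^ 2) / RatFunc.C b

theorem sq_mul_conicRadicand_ne_algebraMap {k : Type*} [Field k] (hchar : (2 : k) ≠ 0)
    {a b : k} (ha : a ≠ 0) (hb : b ≠ 0) {v : RatFunc k} (hv : v ≠ 0) (c : k) :
    v ^ 2 * conicRadicand k a b ≠ algebraMap k (RatFunc k) c := by
  have hsep : (Polynomial.X ^ 2 - Polynomial.C a⁻¹).Separable :=
    Polynomial.separable_X_pow_sub_C _ (by exact_mod_cast hchar) (inv_ne_zero ha)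
  intro h
  refine RatFunc.sq_mul_algebraMap_ne_algebraMap hsep.squarefree
    (by rw [Polynomial.natDegree_X_pow_sub_C]; exact two_pos) hv (-(c * b / a)) ?_
  have hb' : RatFunc.C b ≠ 0 := by simpa using hb
  have ha' : RatFunc.C a ≠ 0 := by simpa using ha
  simp only [conicRadicand, RatFunc.algebraMap_eq_C, map_sub, map_pow, RatFunc.algebraMap_X,
    RatFunc.algebraMap_C, map_neg, map_div₀, map_mul, map_inv₀] at h ⊢
  field_simp at h ⊢
  linear_combination -h

theorem IsConicFunctionField.exists_surjective_algHom {k : Type*} [Field k] {a b : k}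
    (hb : b ≠ 0) {K : Type*} [Field K] [Algebra k K]
    (hK : IsConicFunctionField k a b K (algebraMap k K))
    [Fact (Irreducible (Polynomial.X ^ 2 - Polynomial.C (conicRadicand k a b)))] :
    ∃ Ψ : AdjoinRoot (Polynomial.X ^ 2 - Polynomial.C (conicRadicand k a b)) →ₐ[k] K,
      Function.Surjective Ψ := by
  obtain ⟨F, hinj, hcomp, hfrac⟩ := hK
  let F' : ConicRing k a b →ₐ[k] K :=
    { F with commutes' := fun c ↦ RingHom.congr_fun hcomp c }
  let φ := F'.comp (Ideal.Quotient.mkₐ k _)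
  have hφ (P : MvPolynomial (Fin 2) k) : φ P = F (Ideal.Quotient.mk _ P) := rfl
  have hrel : algebraMap k K a * φ (X 0) ^ 2 + algebraMap k K b * φ (X 1) ^ 2 = 1 := by
    have : φ (conicPoly k a b) = 0 := by
      rw [hφ, Ideal.Quotient.eq_zero_iff_mem.2 (Ideal.mem_span_singleton_self _), map_zero]
    simp only [conicPoly, map_sub, map_add, map_mul, map_pow, algHom_C, map_one] at this
    linear_combination this
  have hx : Transcendental k (φ (X 0)) := fun h ↦
    transcendental_conicRing_X_zero hb ((isAlgebraic_algHom_iff F' hinj).1 h)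
  let Θ : RatFunc k →ₐ[k] K :=
    (IntermediateField.val _).comp (RatFunc.algEquivOfTranscendental _ hx).toAlgHom
  have hΘX : Θ RatFunc.X = φ (X 0) := by simp [Θ]
  have hy : (Polynomial.X ^ 2 - Polynomial.C (conicRadicand k a b)).eval₂
      (Θ : RatFunc k →+* K) (φ (X 1)) = 0 := by
    have hb' : algebraMap k K b ≠ 0 := by simpa using hb
    simp only [conicRadicand, ← RatFunc.algebraMap_eq_C, Polynomial.eval₂_sub,
      Polynomial.eval₂_X_pow, Polynomial.eval₂_C, map_div₀, RingHom.coe_coe, map_sub, map_one,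
      map_mul, AlgHom.commutes, map_pow, hΘX]
    field_simp
    linear_combination hrel
  let Ψ := AdjoinRoot.liftAlgHom _ Θ _ hy
  let ev : MvPolynomial (Fin 2) k →ₐ[k]
      AdjoinRoot (Polynomial.X ^ 2 - Polynomial.C (conicRadicand k a b)) :=
    aeval ![algebraMap (RatFunc k) _ RatFunc.X, AdjoinRoot.root _]
  have hcomm : Ψ.comp ev = φ := by
    refine MvPolynomial.algHom_ext fun i ↦ ?_
    fin_cases i <;> simp [Ψ, ev, hΘX]
  refine ⟨Ψ, fun z ↦ ?_⟩
  obtain ⟨p, q, -, rfl⟩ := hfrac z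
  obtain ⟨P, rfl⟩ := Ideal.Quotient.mk_surjective p
  obtain ⟨Q, rfl⟩ := Ideal.Quotient.mk_surjective q
  refine ⟨ev P / ev Q, ?_⟩
  rw [map_div₀, ← AlgHom.comp_apply, ← AlgHom.comp_apply, hcomm]
  rfl

/-- Let `k` be a field of characteristic `≠ 2`, `a, b ∈ k` nonzero, and let `K` (with
embedding `ι : k →+* K`) be the quotient field `k_{a,b}` of `k[x,y]/(a·x² + b·y² − 1)`.
If `f ∈ K` is algebraic over `k`, then `f` lies in the image of `k`: the field of constants
of `k_{a,b}` over `k` is `k` itself. -/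
theorem conicFunctionField_constants
    (k : Type*) [Field k] (hchar : (2 : k) ≠ 0)
    (a b : k) (ha : a ≠ 0) (hb : b ≠ 0)
    (K : Type*) [Field K] (ι : k →+* K)
    (hK : IsConicFunctionField k a b K ι)
    (f : K) (halg : ∃ p : Polynomial k, p ≠ 0 ∧ Polynomial.eval₂ ι f p = 0) :
    ∃ c : k, f = ι c := by
  let _ : Algebra k K := ι.toAlgebra
  have hd (v : RatFunc k) (hv : v ≠ 0) (c : k) :=
    sq_mul_conicRadicand_ne_algebraMap hchar ha hb hv c
  have := Fact.mk (irreducible_X_sq_sub_C_of_forall_sq_mul_ne hd)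
  obtain ⟨Ψ, hΨ⟩ := IsConicFunctionField.exists_surjective_algHom hb hK
  have hKbot : algebraicClosure k K = ⊥ := by
    rw [← algebraicClosure.map_eq_of_algEquiv (AlgEquiv.ofBijective Ψ ⟨Ψ.injective, hΨ⟩),
      algebraicClosure_adjoinRoot_eq_bot (RatFunc.algebraicClosure_eq_bot k) hchar hd,
      IntermediateField.map_bot]
  obtain ⟨c, hc⟩ := IntermediateField.mem_bot.1 (hKbot ▸ mem_algebraicClosure_iff.2 halg)
  exact ⟨c, hc.symm⟩

end
end

section
/- Let k and ℓ be number fields, let a, b ∈ k and c, d ∈ ℓ be nonzero, set K = k_{a,b} and L = ℓ_{c,d}, and let α be a Witt equivalence from K to L. If P is an ordering of k which extends to an ordering of K, then there exists an ordering Q of ℓ which extends to an ordering of L such that for all nonzero r ∈ k and nonzero s ∈ ℓ with α(square class of r in Kˣ/Kˣ²) = (square class of s in Lˣ/Lˣ²), one has r ∈ P if and only if s ∈ Q. -/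
open MvPolynomial

noncomputable section

/-!
A Witt equivalence `α : Kˣ/Kˣ² → Lˣ/Lˣ²` transports every ordering `P` of `K` to an ordering
of `L`: a nonzero `z ∈ L` is declared positive when `α⁻¹` of its square class consists of
positive elements. Membership in an ordering depends only on the square class; `α(-1) = -1`
gives totality and antisymmetry, and closure under addition comes from `α` preserving the
binary value sets, since `v₁ + v₂` is represented by `⟨v₁, v₂⟩` exactly when a preimage class
is represented by `⟨u₁, u₂⟩`, i.e. is of the form `u₁x² + u₂y² ∈ P`. Restricting the
transported ordering of `L` to `ℓ` gives `Q`.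
-/

lemma sqCl_mul {K : Type*} [Field K] (u v : Kˣ) : sqCl (u * v) = sqCl u * sqCl v :=
  QuotientGroup.mk_mul _ _ _

lemma sqCl_neg {K : Type*} [Field K] (u : Kˣ) : sqCl (-u) = sqCl (-1) * sqCl u := by
  rw [← sqCl_mul, neg_one_mul]

lemma exists_mul_sq_of_sqCl_eq {K : Type*} [Field K] {u v : Kˣ} (h : sqCl u = sqCl v) :
    ∃ w : Kˣ, v = u * w ^ 2 := by
  obtain ⟨w, hw⟩ := QuotientGroup.eq.mp h
  exact ⟨w, by rw [show w ^ 2 = u⁻¹ * v from hw, mul_inv_cancel_left]⟩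

lemma exists_sqCl_preimage {K L : Type*} [Field K] [Field L] (α : SqClass K ≃* SqClass L)
    (v : Lˣ) : ∃ u : Kˣ, α (sqCl u) = sqCl v := by
  obtain ⟨q, hq⟩ := α.surjective (sqCl v)
  obtain ⟨u, rfl⟩ := QuotientGroup.mk_surjective q
  exact ⟨u, hq⟩

lemma IsWittEquiv.map_sqCl_neg {K L : Type*} [Field K] [Field L] {α : SqClass K ≃* SqClass L}
    (hα : IsWittEquiv α) {u : Kˣ} {v : Lˣ} (h : α (sqCl u) = sqCl v) :
    α (sqCl (-u)) = sqCl (-v) := by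
  rw [sqCl_neg, map_mul, hα.map_neg_one, h, ← sqCl_neg]

namespace IsOrdering

variable {F : Type*} [Field F] {P : Set F}

lemma sq_mem (hP : IsOrdering P) (x : F) : x ^ 2 ∈ P := by
  rcases hP.total x with hx | hx
  · simpa [sq] using hP.mul_mem x hx x hx
  · simpa [sq] using hP.mul_mem _ hx _ hx

lemma mem_of_sqCl_eq (hP : IsOrdering P) {u v : Fˣ} (hu : (u : F) ∈ P)
    (huv : sqCl u = sqCl v) : (v : F) ∈ P := by
  obtain ⟨w, rfl⟩ := exists_mul_sq_of_sqCl_eq huv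
  push_cast
  exact hP.mul_mem _ hu _ (hP.sq_mem _)

lemma comap {E : Type*} [Field E] {P : Set E} (hP : IsOrdering P) (f : F →+* E) :
    IsOrdering (f ⁻¹' P) where
  add_mem x hx y hy := by simpa only [Set.mem_preimage, map_add] using hP.add_mem _ hx _ hy
  mul_mem x hx y hy := by simpa only [Set.mem_preimage, map_mul] using hP.mul_mem _ hx _ hy
  total x := by simpa only [Set.mem_preimage, map_neg] using hP.total (f x)
  antisymm x hx hnx := f.injective <| by
    rw [map_zero]
    exact hP.antisymm _ hx (by simpa only [Set.mem_preimage, map_neg] using hnx)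

end IsOrdering

section MapOrdering

variable {K L : Type*} [Field K] [Field L] {α : SqClass K ≃* SqClass L} {P : Set K}

def mapOrdering (α : SqClass K ≃* SqClass L) (P : Set K) : Set L :=
  {z | z = 0 ∨ ∃ (u : Kˣ) (v : Lˣ), (u : K) ∈ P ∧ (v : L) = z ∧ α (sqCl u) = sqCl v}

lemma zero_mem_mapOrdering : (0 : L) ∈ mapOrdering α P := Or.inl rfl

lemma mem_mapOrdering_iff (hP : IsOrdering P) {u : Kˣ} {v : Lˣ} (h : α (sqCl u) = sqCl v) :
    (v : L) ∈ mapOrdering α P ↔ (u : K) ∈ P := by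
  refine ⟨?_, fun hu => Or.inr ⟨u, v, hu, rfl, h⟩⟩
  rintro (h0 | ⟨u', v', hu', hv', h'⟩)
  · exact absurd h0 v.ne_zero
  obtain rfl : v' = v := Units.ext hv'
  exact hP.mem_of_sqCl_eq hu' (α.injective (h'.trans h.symm))

lemma eq_zero_of_mem_mapOrdering_of_neg_mem (hα : IsWittEquiv α) (hP : IsOrdering P) {z : L}
    (hz : z ∈ mapOrdering α P) (hnz : -z ∈ mapOrdering α P) : z = 0 := by
  by_contra hz0
  obtain ⟨v, rfl⟩ := Ne.isUnit hz0
  obtain ⟨u, hu⟩ := exists_sqCl_preimage α v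
  have hpos : (u : K) ∈ P := (mem_mapOrdering_iff hP hu).mp hz
  have hneg : ((-u : Kˣ) : K) ∈ P :=
    (mem_mapOrdering_iff hP (hα.map_sqCl_neg hu)).mp (by rwa [Units.val_neg])
  rw [Units.val_neg] at hneg
  exact u.ne_zero (hP.antisymm _ hpos hneg)

lemma add_mem_mapOrdering (hα : IsWittEquiv α) (hP : IsOrdering P) {z₁ z₂ : L}
    (hz₁ : z₁ ∈ mapOrdering α P) (hz₂ : z₂ ∈ mapOrdering α P) :
    z₁ + z₂ ∈ mapOrdering α P := by
  rcases eq_or_ne z₁ 0 with rfl | hz₁0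
  · rwa [zero_add]
  rcases eq_or_ne z₂ 0 with rfl | hz₂0
  · rwa [add_zero]
  rcases eq_or_ne (z₁ + z₂) 0 with hsum | hsum
  · rw [hsum]; exact zero_mem_mapOrdering
  obtain ⟨v₁, rfl⟩ := Ne.isUnit hz₁0
  obtain ⟨v₂, rfl⟩ := Ne.isUnit hz₂0
  obtain ⟨v₃, hv₃⟩ := Ne.isUnit hsum
  obtain ⟨u₁, h₁⟩ := exists_sqCl_preimage α v₁
  obtain ⟨u₂, h₂⟩ := exists_sqCl_preimage α v₂
  obtain ⟨u₃, h₃⟩ := exists_sqCl_preimage α v₃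
  obtain ⟨x, y, hxy⟩ :=
    (hα.represents u₁ u₂ u₃ v₁ v₂ v₃ h₁ h₂ h₃).mpr ⟨1, 1, by rw [hv₃]; ring⟩
  rw [← hv₃, mem_mapOrdering_iff hP h₃, hxy]
  exact hP.add_mem _ (hP.mul_mem _ ((mem_mapOrdering_iff hP h₁).mp hz₁) _ (hP.sq_mem x)) _
    (hP.mul_mem _ ((mem_mapOrdering_iff hP h₂).mp hz₂) _ (hP.sq_mem y))

lemma mul_mem_mapOrdering (hP : IsOrdering P) {z₁ z₂ : L}
    (hz₁ : z₁ ∈ mapOrdering α P) (hz₂ : z₂ ∈ mapOrdering α P) :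
    z₁ * z₂ ∈ mapOrdering α P := by
  rcases eq_or_ne z₁ 0 with rfl | hz₁0
  · rw [zero_mul]; exact zero_mem_mapOrdering
  rcases eq_or_ne z₂ 0 with rfl | hz₂0
  · rw [mul_zero]; exact zero_mem_mapOrdering
  obtain ⟨v₁, rfl⟩ := Ne.isUnit hz₁0
  obtain ⟨v₂, rfl⟩ := Ne.isUnit hz₂0
  obtain ⟨u₁, h₁⟩ := exists_sqCl_preimage α v₁
  obtain ⟨u₂, h₂⟩ := exists_sqCl_preimage α v₂
  have h : α (sqCl (u₁ * u₂)) = sqCl (v₁ * v₂) := by rw [sqCl_mul, map_mul, h₁, h₂, sqCl_mul]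
  rw [← Units.val_mul, mem_mapOrdering_iff hP h, Units.val_mul]
  exact hP.mul_mem _ ((mem_mapOrdering_iff hP h₁).mp hz₁) _ ((mem_mapOrdering_iff hP h₂).mp hz₂)

lemma mem_mapOrdering_or_neg_mem (hα : IsWittEquiv α) (hP : IsOrdering P) (z : L) :
    z ∈ mapOrdering α P ∨ -z ∈ mapOrdering α P := by
  rcases eq_or_ne z 0 with rfl | hz0
  · exact Or.inl zero_mem_mapOrdering
  obtain ⟨v, rfl⟩ := Ne.isUnit hz0
  obtain ⟨u, hu⟩ := exists_sqCl_preimage α v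
  rw [mem_mapOrdering_iff hP hu, ← Units.val_neg, mem_mapOrdering_iff hP (hα.map_sqCl_neg hu),
    Units.val_neg]
  exact hP.total u

lemma IsOrdering.mapOrdering (hP : IsOrdering P) (hα : IsWittEquiv α) :
    IsOrdering (mapOrdering α P) where
  add_mem _ hx _ hy := add_mem_mapOrdering hα hP hx hy
  mul_mem _ hx _ hy := mul_mem_mapOrdering hP hx hy
  total := mem_mapOrdering_or_neg_mem hα hP
  antisymm _ hx hnx := eq_zero_of_mem_mapOrdering_of_neg_mem hα hP hx hnx

end MapOrdering

theorem wittEquiv_conic_orderings_correspond_general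
    (k : Type*) [Field k] (l : Type*) [Field l]
    (K : Type*) [Field K] (ι : k →+* K)
    (L : Type*) [Field L] (ι' : l →+* L)
    (α : SqClass K ≃* SqClass L) (hα : IsWittEquiv α)
    (P : Set k)
    (hPext : ∃ P₁ : Set K, IsOrdering P₁ ∧ ι ⁻¹' P₁ = P) :
    ∃ Q : Set l, IsOrdering Q ∧ (∃ Q₁ : Set L, IsOrdering Q₁ ∧ ι' ⁻¹' Q₁ = Q) ∧
      ∀ (r : kˣ) (s : lˣ),
        α (sqCl (Units.map ι.toMonoidHom r)) = sqCl (Units.map ι'.toMonoidHom s) →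
        ((r : k) ∈ P ↔ (s : l) ∈ Q) := by
  obtain ⟨P₁, hP₁, rfl⟩ := hPext
  have hQ₁ : IsOrdering (mapOrdering α P₁) := hP₁.mapOrdering hα
  exact ⟨ι' ⁻¹' mapOrdering α P₁, hQ₁.comap ι', ⟨_, hQ₁, rfl⟩,
    fun r s hrs => (mem_mapOrdering_iff hP₁ hrs).symm⟩

/-- Let `k, ℓ` be number fields, `K = k_{a,b}`, `L = ℓ_{c,d}`, and `α` a Witt equivalence
from `K` to `L`.  If `P` is an ordering of `k` which extends to an ordering of `K`, then
there is an ordering `Q` of `ℓ` which extends to an ordering of `L` such that `α` maps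
(the square classes of) positive elements of `P` exactly to positive elements of `Q`. -/
theorem wittEquiv_conic_orderings_correspond
    (k : Type*) [Field k] [NumberField k] (l : Type*) [Field l] [NumberField l]
    (a b : k) (ha : a ≠ 0) (hb : b ≠ 0) (c d : l) (hc : c ≠ 0) (hd : d ≠ 0)
    (K : Type*) [Field K] (ι : k →+* K) (hK : IsConicFunctionField k a b K ι)
    (L : Type*) [Field L] (ι' : l →+* L) (hL : IsConicFunctionField l c d L ι')
    (α : SqClass K ≃* SqClass L) (hα : IsWittEquiv α)
    (P : Set k) (hP : IsOrdering P)
    (hPext : ∃ P₁ : Set K, IsOrdering P₁ ∧ ι ⁻¹' P₁ = P) :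
    ∃ Q : Set l, IsOrdering Q ∧ (∃ Q₁ : Set L, IsOrdering Q₁ ∧ ι' ⁻¹' Q₁ = Q) ∧
      ∀ (r : kˣ) (s : lˣ),
        α (sqCl (Units.map ι.toMonoidHom r)) = sqCl (Units.map ι'.toMonoidHom s) →
        ((r : k) ∈ P ↔ (s : l) ∈ Q) :=
  wittEquiv_conic_orderings_correspond_general k l K ι L ι' α hα P hPext

end
end

section
/- Let a, b, c, d ∈ ℝ be nonzero. If the fields ℝ_{a,b} and ℝ_{c,d} are Witt equivalent, then the quaternion algebras (a,b/ℝ) and (c,d/ℝ) are isomorphic as ℝ-algebras (equivalently, they are either both split or both non-split over ℝ). -/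
open MvPolynomial

noncomputable section

/-
Over `ℝ`, the quaternion algebra `(a,b/ℝ)` is determined up to isomorphism by whether `a` and `b`
are both negative: rescaling the generators by square roots reduces to `(±1,±1/ℝ)`, and
`(1,1)`, `(1,-1)`, `(-1,1)` are all split. Both negative is also exactly when `-1` is a sum of
two squares in `ℝ_{a,b}`. If `a, b < 0` this is the conic equation itself. Otherwise the real
points of the conic are Zariski dense (for infinitely many `x` there are two points `(x, ±y)`
with `y ≠ 0`), so a sum of three squares vanishing in the coordinate ring has all its terms
vanishing; clearing denominators in `-1 = x² + y²` would give such a sum with a nonzero term.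
Finally, `-1 ∈ D⟨1,1⟩` is a statement about the square classes of `1` and `-1` alone, so it is
preserved by Witt equivalence.
-/
section

open Polynomial Polynomial.Bivariate

theorem MvPolynomial.eval_equivMvPolynomial {R : Type*} [CommRing R] (x y : R) (p : R[X][Y]) :
    MvPolynomial.eval ![x, y] (equivMvPolynomial R p) = p.evalEval x y := by
  induction p using Polynomial.induction_on' with
  | add p q hp hq => simp [hp, hq]
  | monomial n p =>
    induction p using Polynomial.induction_on' with
    | add p q hp hq => simp_all
    | monomial m a =>
      rw [← Polynomial.C_mul_X_pow_eq_monomial, ← Polynomial.C_mul_X_pow_eq_monomial]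
      simp [evalEval_C]

theorem Polynomial.eq_zero_of_evalEval_eq_zero_of_degree_le_one {F : Type*} [Field F]
    [NeZero (2 : F)] {r : F[X][Y]} (hr : r.degree ≤ 1) {s : Set F} (hs : s.Infinite)
    (h : ∀ x ∈ s, ∃ y ≠ 0, r.evalEval x y = 0 ∧ r.evalEval x (-y) = 0) : r = 0 := by
  set r₁ := r.coeff 1
  set r₀ := r.coeff 0
  have hform : r = C r₁ * Y + C r₀ := eq_X_add_C_of_degree_le_one hr
  have hroots : ∀ x ∈ s, r₀.IsRoot x ∧ r₁.IsRoot x := fun x hx => by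
    obtain ⟨y, hy, hpos, hneg⟩ := h x hx
    rw [hform] at hpos hneg
    simp only [evalEval_add, evalEval_mul, evalEval_C, evalEval_X] at hpos hneg
    have h₀ : r₀.eval x = 0 :=
      (mul_eq_zero.1 (by linear_combination hpos + hneg : (2 : F) * r₀.eval x = 0)).resolve_left
        two_ne_zero
    exact ⟨h₀, (mul_eq_zero.1 (by linear_combination hpos - h₀ : r₁.eval x * y = 0)).resolve_right
      hy⟩
  have h₀ : r₀ = 0 := eq_zero_of_infinite_isRoot _ (hs.mono fun x hx => (hroots x hx).1)
  have h₁ : r₁ = 0 := eq_zero_of_infinite_isRoot _ (hs.mono fun x hx => (hroots x hx).2)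
  rw [hform, h₀, h₁]
  simp

theorem infinite_setOf_exists_ne_zero_conic {a b : ℝ} (hab : 0 < a ∨ 0 < b) (hb : b ≠ 0) :
    {x : ℝ | ∃ y ≠ 0, a * x ^ 2 + b * y ^ 2 = 1}.Infinite := by
  set U := {x : ℝ | 0 < (1 - a * x ^ 2) / b}
  have hU : IsOpen U := isOpen_lt continuous_const (by fun_prop)
  have hsub : U ⊆ {x : ℝ | ∃ y ≠ 0, a * x ^ 2 + b * y ^ 2 = 1} := fun x hx =>
    ⟨√((1 - a * x ^ 2) / b), Real.sqrt_ne_zero'.2 hx, by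
      rw [Real.sq_sqrt hx.le]
      field_simp
      ring⟩
  obtain ⟨x₀, hx₀⟩ : U.Nonempty := by
    rcases hb.lt_or_gt with hb' | hb'
    · have ha := hab.resolve_right hb'.not_gt
      refine ⟨√(2 / a), ?_⟩
      simp only [U, Set.mem_ofPred_eq, Real.sq_sqrt (div_pos two_pos ha).le]
      rw [mul_div_cancel₀ _ ha.ne']
      exact div_pos_of_neg_of_neg (by norm_num) hb'
    · exact ⟨0, by simpa [U] using hb'⟩
  exact (infinite_of_mem_nhds x₀ (hU.mem_nhds hx₀)).mono hsub

theorem conicPoly_dvd_of_forall_eval_eq_zero {a b : ℝ} (hab : 0 < a ∨ 0 < b) (hb : b ≠ 0)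
    {S : MvPolynomial (Fin 2) ℝ}
    (hS : ∀ x y : ℝ, a * x ^ 2 + b * y ^ 2 = 1 → MvPolynomial.eval ![x, y] S = 0) :
    conicPoly ℝ a b ∣ S := by
  set g : ℝ[X][Y] :=
    Y ^ 2 + Polynomial.C (Polynomial.C b⁻¹ * (Polynomial.C a * Polynomial.X ^ 2 - 1))
  have hg : g.Monic := monic_X_pow_add_C _ two_ne_zero
  have hconic : conicPoly ℝ a b = MvPolynomial.C b * equivMvPolynomial ℝ g := by
    simp only [g, conicPoly, map_mul, map_add, map_sub, map_pow, map_one, equivMvPolynomial_C_C,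
      equivMvPolynomial_C_X, equivMvPolynomial_X]
    rw [mul_add, ← mul_assoc, ← map_mul, mul_inv_cancel₀ hb, map_one]
    ring
  set P := (equivMvPolynomial ℝ).symm S
  have hP : ∀ x y, P.evalEval x y = MvPolynomial.eval ![x, y] S := fun x y => by
    rw [← MvPolynomial.eval_equivMvPolynomial, AlgEquiv.apply_symm_apply]
  have hg0 : ∀ x y, a * x ^ 2 + b * y ^ 2 = 1 → g.evalEval x y = 0 := fun x y h => by
    simp only [g, evalEval_add, evalEval_pow, evalEval_X, evalEval_C, Polynomial.eval_mul,
      Polynomial.eval_C, Polynomial.eval_sub, Polynomial.eval_pow, Polynomial.eval_X,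
      Polynomial.eval_one]
    field_simp
    linear_combination h
  -- `P %ₘ g` is linear in `y` and vanishes at `(x, ±y)`, `y ≠ 0`, for infinitely many `x`.
  have hmod : P %ₘ g = 0 := by
    refine eq_zero_of_evalEval_eq_zero_of_degree_le_one ?_
      (infinite_setOf_exists_ne_zero_conic hab hb) ?_
    · have hlt := degree_modByMonic_lt P hg
      rw [degree_X_pow_add_C two_pos] at hlt
      exact Order.le_of_lt_succ hlt
    · rintro x ⟨y, hy, hxy⟩
      have hev : ∀ y, a * x ^ 2 + b * y ^ 2 = 1 → (P %ₘ g).evalEval x y = 0 := fun y h => by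
        rw [modByMonic_eq_sub_mul_div, evalEval_sub, evalEval_mul, hg0 x y h, hP, hS x y h]
        ring
      exact ⟨y, hy, hev y hxy, hev (-y) (by rwa [neg_sq])⟩
  obtain ⟨q, hq⟩ := (modByMonic_eq_zero_iff_dvd hg).1 hmod
  refine ⟨MvPolynomial.C b⁻¹ * equivMvPolynomial ℝ q, ?_⟩
  rw [show S = equivMvPolynomial ℝ P by simp [P], hq, map_mul, hconic]
  have hbb : MvPolynomial.C b * MvPolynomial.C b⁻¹ = (1 : MvPolynomial (Fin 2) ℝ) := by
    rw [← map_mul, mul_inv_cancel₀ hb, map_one]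
  linear_combination (-(equivMvPolynomial ℝ g * equivMvPolynomial ℝ q)) * hbb

end

theorem ConicRing.eq_zero_of_sq_add_sq_add_sq_eq_zero {a b : ℝ} (hab : 0 < a ∨ 0 < b)
    (hb : b ≠ 0) {u v w : ConicRing ℝ a b} (h : u ^ 2 + v ^ 2 + w ^ 2 = 0) : w = 0 := by
  obtain ⟨A, rfl⟩ := Ideal.Quotient.mk_surjective u
  obtain ⟨B, rfl⟩ := Ideal.Quotient.mk_surjective v
  obtain ⟨S, rfl⟩ := Ideal.Quotient.mk_surjective w
  rw [← map_pow, ← map_pow, ← map_pow, ← map_add, ← map_add, Ideal.Quotient.eq_zero_iff_mem,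
    Ideal.mem_span_singleton'] at h
  obtain ⟨H, hH⟩ := h
  rw [Ideal.Quotient.eq_zero_iff_mem, Ideal.mem_span_singleton]
  refine conicPoly_dvd_of_forall_eval_eq_zero hab hb fun x y hxy => ?_
  have hsum := congrArg (MvPolynomial.eval ![x, y]) hH
  simp only [conicPoly, map_add, map_mul, map_pow, map_sub, map_one, MvPolynomial.eval_C,
    MvPolynomial.eval_X, Matrix.cons_val_zero, Matrix.cons_val_one, hxy, sub_self,
    mul_zero] at hsum
  refine pow_eq_zero_iff two_ne_zero |>.1 ?_
  nlinarith [sq_nonneg (MvPolynomial.eval ![x, y] A), sq_nonneg (MvPolynomial.eval ![x, y] B),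
    sq_nonneg (MvPolynomial.eval ![x, y] S)]

theorem ConicRing.algebraMap_mul_sq_add_algebraMap_mul_sq (k : Type*) [Field k] (a b : k) :
    algebraMap k (ConicRing k a b) a * Ideal.Quotient.mk _ (X 0) ^ 2 +
      algebraMap k (ConicRing k a b) b * Ideal.Quotient.mk _ (X 1) ^ 2 = 1 := by
  have h := Ideal.Quotient.eq_zero_iff_mem.2 (Ideal.mem_span_singleton_self (conicPoly k a b))
  rwa [conicPoly, map_sub, sub_eq_zero, map_add, map_mul, map_mul, map_pow, map_pow, map_one,
    ← MvPolynomial.algebraMap_eq, ← Ideal.Quotient.algebraMap_eq] at h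

theorem IsConicFunctionField.exists_neg_one_eq_sq_add_sq {a b : ℝ} (ha : a < 0) (hb : b < 0)
    {K : Type*} [Field K] {ι : ℝ →+* K} (hK : IsConicFunctionField ℝ a b K ι) :
    ∃ x y : K, -1 = x ^ 2 + y ^ 2 := by
  obtain ⟨f, -, hι, -⟩ := hK
  have hrel := congrArg f (ConicRing.algebraMap_mul_sq_add_algebraMap_mul_sq ℝ a b)
  have hfι (r : ℝ) : f (algebraMap ℝ _ r) = ι r := by rw [← hι, RingHom.comp_apply]
  simp only [map_add, map_mul, map_pow, map_one, hfι] at hrel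
  have hsq {r : ℝ} (hr : r < 0) : ι √(-r) ^ 2 = -ι r := by
    rw [← map_pow, Real.sq_sqrt (neg_nonneg.2 hr.le), map_neg]
  refine ⟨ι √(-a) * f (Ideal.Quotient.mk _ (X 0)), ι √(-b) * f (Ideal.Quotient.mk _ (X 1)), ?_⟩
  linear_combination hrel - f (Ideal.Quotient.mk _ (X 0)) ^ 2 * hsq ha
    - f (Ideal.Quotient.mk _ (X 1)) ^ 2 * hsq hb

theorem IsConicFunctionField.not_exists_neg_one_eq_sq_add_sq {a b : ℝ} (hab : 0 < a ∨ 0 < b)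
    (hb : b ≠ 0) {K : Type*} [Field K] {ι : ℝ →+* K} (hK : IsConicFunctionField ℝ a b K ι) :
    ¬∃ x y : K, -1 = x ^ 2 + y ^ 2 := by
  rintro ⟨x, y, hxy⟩
  obtain ⟨f, hf, -, hfrac⟩ := hK
  obtain ⟨p, q, hq, rfl⟩ := hfrac x
  obtain ⟨p', q', hq', rfl⟩ := hfrac y
  have hsum : (p * q') ^ 2 + (p' * q) ^ 2 + (q * q') ^ 2 = 0 := hf <| by
    simp only [map_add, map_pow, map_mul, map_zero]
    field_simp at hxy
    linear_combination -hxy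
  exact mul_ne_zero hq hq' <| by
    rw [← map_mul, ConicRing.eq_zero_of_sq_add_sq_add_sq_eq_zero hab hb hsum, map_zero]

theorem IsConicFunctionField.exists_neg_one_eq_sq_add_sq_iff {a b : ℝ} (ha : a ≠ 0) (hb : b ≠ 0)
    {K : Type*} [Field K] {ι : ℝ →+* K} (hK : IsConicFunctionField ℝ a b K ι) :
    (∃ x y : K, -1 = x ^ 2 + y ^ 2) ↔ a < 0 ∧ b < 0 := by
  refine ⟨fun h => ?_, fun hab => hK.exists_neg_one_eq_sq_add_sq hab.1 hab.2⟩
  by_contra hab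
  have hpos : 0 < a ∨ 0 < b := by
    by_contra! hle
    exact hab ⟨hle.1.lt_of_ne ha, hle.2.lt_of_ne hb⟩
  exact hK.not_exists_neg_one_eq_sq_add_sq hpos hb h

theorem WittEquivalent.exists_neg_one_eq_sq_add_sq_iff {K L : Type*} [Field K] [Field L]
    (h : WittEquivalent K L) :
    (∃ x y : K, -1 = x ^ 2 + y ^ 2) ↔ ∃ x y : L, -1 = x ^ 2 + y ^ 2 := by
  obtain ⟨α, hα⟩ := h
  have hone : α (sqCl 1) = sqCl 1 := map_one α
  simpa using hα.represents 1 1 (-1) 1 1 (-1) hone hone hα.map_neg_one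

namespace QuaternionAlgebra

open scoped Quaternion

variable {R : Type*} [Field R]

def scaleEquiv {a b a' b' u v : R} (hu : u ≠ 0) (hv : v ≠ 0) (ha : a' = u ^ 2 * a)
    (hb : b' = v ^ 2 * b) : ℍ[R, a', b'] ≃ₐ[R] ℍ[R, a, b] where
  toFun t := ⟨t.re, u * t.imI, v * t.imJ, u * v * t.imK⟩
  invFun t := ⟨t.re, u⁻¹ * t.imI, v⁻¹ * t.imJ, u⁻¹ * v⁻¹ * t.imK⟩
  left_inv t := by ext <;> field_simp
  right_inv t := by ext <;> field_simp
  map_mul' s t := by subst ha hb; ext <;> simp <;> ring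
  map_add' s t := by ext <;> simp [mul_add]
  commutes' r := by ext <;> simp

/-- `j` is sent to `k = ij`, which squares to `-ab`. -/
def negMulEquiv {a b b' : R} (ha : a ≠ 0) (hb : b' = -(a * b)) :
    ℍ[R, a, b'] ≃ₐ[R] ℍ[R, a, b] where
  toFun t := ⟨t.re, t.imI, a * t.imK, t.imJ⟩
  invFun t := ⟨t.re, t.imI, t.imK, a⁻¹ * t.imJ⟩
  left_inv t := by ext <;> simp [ha]
  right_inv t := by ext <;> simp [ha]
  map_mul' s t := by subst hb; ext <;> simp <;> ring
  map_add' s t := by ext <;> simp [mul_add]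
  commutes' r := by ext <;> simp

theorem nonempty_algEquiv_one_one_of_pos {a : ℝ} (b : ℝ) (ha : 0 < a) (hb : b ≠ 0) :
    Nonempty (ℍ[ℝ, a, b] ≃ₐ[ℝ] ℍ[ℝ, 1, 1]) := by
  have sq_sqrt_mul_one {r : ℝ} (hr : 0 < r) : r = √r ^ 2 * 1 := by simp [Real.sq_sqrt hr.le]
  have toOneOne {r s : ℝ} (hr : 0 < r) (hs : 0 < s) : ℍ[ℝ, r, s] ≃ₐ[ℝ] ℍ[ℝ, 1, 1] :=
    scaleEquiv (Real.sqrt_ne_zero'.2 hr) (Real.sqrt_ne_zero'.2 hs) (sq_sqrt_mul_one hr)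
      (sq_sqrt_mul_one hs)
  rcases hb.lt_or_gt with hb | hb
  · exact ⟨(negMulEquiv (b' := -(a * b)) ha.ne' rfl).symm.trans (toOneOne ha (by nlinarith))⟩
  · exact ⟨toOneOne ha hb⟩

theorem nonempty_algEquiv_neg_one_neg_one {a b : ℝ} (ha : a < 0) (hb : b < 0) :
    Nonempty (ℍ[ℝ, a, b] ≃ₐ[ℝ] ℍ[ℝ, -1, -1]) := by
  have sq_sqrt_mul_neg_one {r : ℝ} (hr : r < 0) : r = √(-r) ^ 2 * -1 := by
    simp [Real.sq_sqrt (neg_nonneg.2 hr.le)]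
  exact ⟨scaleEquiv (Real.sqrt_ne_zero'.2 (neg_pos.2 ha)) (Real.sqrt_ne_zero'.2 (neg_pos.2 hb))
    (sq_sqrt_mul_neg_one ha) (sq_sqrt_mul_neg_one hb)⟩

theorem nonempty_algEquiv_of_neg_and_neg_iff {a b c d : ℝ} (ha : a ≠ 0) (hb : b ≠ 0)
    (hc : c ≠ 0) (hd : d ≠ 0) (h : a < 0 ∧ b < 0 ↔ c < 0 ∧ d < 0) :
    Nonempty (ℍ[ℝ, a, b] ≃ₐ[ℝ] ℍ[ℝ, c, d]) := by
  have nonempty_one_one {r s : ℝ} (hr : r ≠ 0) (hs : s ≠ 0) (hrs : ¬(r < 0 ∧ s < 0)) :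
      Nonempty (ℍ[ℝ, r, s] ≃ₐ[ℝ] ℍ[ℝ, 1, 1]) := by
    rcases hr.lt_or_gt with hr' | hr'
    · obtain ⟨e⟩ := nonempty_algEquiv_one_one_of_pos r ((hs.lt_or_gt.resolve_left
        fun hs' => hrs ⟨hr', hs'⟩)) hr
      exact ⟨(swapEquiv r s).trans e⟩
    · exact nonempty_algEquiv_one_one_of_pos s hr' hs
  by_cases hab : a < 0 ∧ b < 0
  · obtain ⟨e⟩ := nonempty_algEquiv_neg_one_neg_one hab.1 hab.2
    obtain ⟨e'⟩ := nonempty_algEquiv_neg_one_neg_one (h.1 hab).1 (h.1 hab).2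
    exact ⟨e.trans e'.symm⟩
  · obtain ⟨e⟩ := nonempty_one_one ha hb hab
    obtain ⟨e'⟩ := nonempty_one_one hc hd (hab ∘ h.2)
    exact ⟨e.trans e'.symm⟩

end QuaternionAlgebra

open Quaternion in
/-- Let `a, b, c, d ∈ ℝ` be nonzero.  If `ℝ_{a,b}` and `ℝ_{c,d}` are Witt equivalent,
then the quaternion algebras `(a,b/ℝ)` and `(c,d/ℝ)` are isomorphic as `ℝ`-algebras. -/
theorem wittEquiv_real_conic_implies_quaternion_iso
    (a b c d : ℝ) (ha : a ≠ 0) (hb : b ≠ 0) (hc : c ≠ 0) (hd : d ≠ 0)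
    (K : Type*) [Field K] (ι : ℝ →+* K) (hK : IsConicFunctionField ℝ a b K ι)
    (L : Type*) [Field L] (ι' : ℝ →+* L) (hL : IsConicFunctionField ℝ c d L ι')
    (hWE : WittEquivalent K L) :
    Nonempty (ℍ[ℝ, a, b] ≃ₐ[ℝ] ℍ[ℝ, c, d]) :=
  QuaternionAlgebra.nonempty_algEquiv_of_neg_and_neg_iff ha hb hc hd <|
    (hK.exists_neg_one_eq_sq_add_sq_iff ha hb).symm.trans <|
      hWE.exists_neg_one_eq_sq_add_sq_iff.trans (hL.exists_neg_one_eq_sq_add_sq_iff hc hd)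

end
end
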